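/- arXiv:cs/0509071 — 10 statements merged into one kernel-verified Lean document; each statement's English description precedes it below -/
import Mathlib

section
/- Let N be a CP-net and let G(N) be the strategic game with parametrized preferences associated with N. An outcome of N is optimal if and only if it is a Nash equilibrium of G(N). -/
/-- A CP-net over a finite set of variables `ι`, with variable values drawn from `V`.
`dom i` is the (finite, non-empty) domain of variable `i`, `parents i` its set of
parent variables.  `pref i a x y` means: in the (unique) preference statement for
variable `i` determined by the restriction of the assignment `a` to `parents i`,
the value `x` is strictly preferred to the value `y`.  Preference statements exist
only for assignments with all values in the domains, and order only domain values
(`pref_dom`), depend only on the values of the parents (`pref_local`), and are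
strict linear orders on `dom i` (`pref_irrefl`, `pref_trans`, `pref_total`). -/
structure CPNet (ι V : Type*) where
  dom : ι → Finset V
  dom_nonempty : ∀ i, (dom i).Nonempty
  parents : ι → Finset ι
  not_self_parent : ∀ i, i ∉ parents i
  pref : ι → (ι → V) → V → V → Prop
  pref_dom : ∀ i a x y, pref i a x y → (∀ j, a j ∈ dom j) ∧ x ∈ dom i ∧ y ∈ dom i
  pref_local : ∀ i a b, (∀ j, a j ∈ dom j) → (∀ j, b j ∈ dom j) →
      (∀ j ∈ parents i, a j = b j) → pref i a = pref i b
  pref_irrefl : ∀ i a x, ¬ pref i a x x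
  pref_trans : ∀ i a x y z, pref i a x y → pref i a y z → pref i a x z
  pref_total : ∀ i a, (∀ j, a j ∈ dom j) →
      ∀ x ∈ dom i, ∀ y ∈ dom i, x = y ∨ pref i a x y ∨ pref i a y x

/-- A strategic game with parametrized preferences: each player `i` has a finite
non-empty set `strat i` of strategies, and for each joint strategy of his opponents
a strict linear order on his own strategies.  `pref i s x y` means: given the joint
strategy `s` (only its components other than `i` matter, cf. `pref_indep`), player
`i` strictly prefers his strategy `x` to `y`. -/
structure ParamGame (ι V : Type*) where
  strat : ι → Finset V
  strat_nonempty : ∀ i, (strat i).Nonempty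
  pref : ι → (ι → V) → V → V → Prop
  pref_dom : ∀ i s x y, pref i s x y → (∀ j, s j ∈ strat j) ∧ x ∈ strat i ∧ y ∈ strat i
  pref_indep : ∀ i s t, (∀ j, s j ∈ strat j) → (∀ j, t j ∈ strat j) →
      (∀ j, j ≠ i → s j = t j) → pref i s = pref i t
  pref_irrefl : ∀ i s x, ¬ pref i s x x
  pref_trans : ∀ i s x y z, pref i s x y → pref i s y z → pref i s x z
  pref_total : ∀ i s, (∀ j, s j ∈ strat j) →
      ∀ x ∈ strat i, ∀ y ∈ strat i, x = y ∨ pref i s x y ∨ pref i s y x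

namespace CPNet

variable {ι V : Type*}

/-- An outcome of a CP-net: an assignment of a domain value to each variable. -/
def Valid (N : CPNet ι V) (s : ι → V) : Prop := ∀ i, s i ∈ N.dom i

/-- A worsening flip from outcome `s` to outcome `t`: they differ in (at most) the value
of one variable `i`, and the value of `i` in `s` is strictly preferred to its value in
`t` according to the unique preference statement for `i` determined by the values of the
parents of `i` (on which `s` and `t` agree). -/
def WFlip (N : CPNet ι V) (s t : ι → V) : Prop :=
  N.Valid s ∧ N.Valid t ∧ ∃ i, (∀ j, j ≠ i → s j = t j) ∧ N.pref i s (s i) (t i)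

/-- `s` is better than `t` iff there is a nonempty chain of worsening flips from `s` to `t`. -/
def Better (N : CPNet ι V) (s t : ι → V) : Prop := Relation.TransGen N.WFlip s t

/-- An optimal outcome: a (valid) outcome such that no better outcome exists. -/
def Optimal (N : CPNet ι V) (s : ι → V) : Prop := N.Valid s ∧ ∀ t, ¬ N.Better t s

end CPNet

namespace ParamGame

variable {ι V : Type*}

/-- A joint strategy of the game. -/
def Valid (G : ParamGame ι V) (s : ι → V) : Prop := ∀ i, s i ∈ G.strat i

/-- A joint strategy `s` is a (pure) Nash equilibrium iff for every player `i` and every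
strategy `v` of player `i`, either `s i` is strictly preferred to `v` (given the joint
strategy `s` of the opponents) or `s i = v`. -/
def NashEq (G : ParamGame ι V) (s : ι → V) : Prop :=
  G.Valid s ∧ ∀ i, ∀ v ∈ G.strat i, G.pref i s (s i) v ∨ s i = v

end ParamGame

/-- The game `G(N)` associated with a CP-net `N`: players are the variables, the
strategies of player `i` are the domain values of variable `i`, and the preference of
player `i` parametrized by a joint strategy of his opponents is the one given by the
unique preference statement for `i` determined by the values of the parents of `i`. -/
def CPNet.toGame {ι V : Type*} (N : CPNet ι V) : ParamGame ι V where
  strat := N.dom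
  strat_nonempty := N.dom_nonempty
  pref := N.pref
  pref_dom := N.pref_dom
  pref_indep := fun i s t hs ht h =>
    N.pref_local i s t hs ht (fun j hj =>
      h j (fun hji => N.not_self_parent i (hji ▸ hj)))
  pref_irrefl := N.pref_irrefl
  pref_trans := N.pref_trans
  pref_total := N.pref_total

/-- The CP-net `N(G)` associated with a game `G`: variables are the players, the domain
of variable `i` is the strategy set of player `i`, the parents of `i` are all the other
variables, and the preference statement for `i` given a joint strategy of the opponents
is the parametrized preference of player `i`. -/
def ParamGame.toCPNet {ι V : Type*} [Fintype ι] [DecidableEq ι]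
    (G : ParamGame ι V) : CPNet ι V where
  dom := G.strat
  dom_nonempty := G.strat_nonempty
  parents := fun i => Finset.univ.erase i
  not_self_parent := fun i => Finset.notMem_erase i _
  pref := G.pref
  pref_dom := G.pref_dom
  pref_local := fun i a b ha hb h =>
    G.pref_indep i a b ha hb (fun j hj =>
      h j (Finset.mem_erase.2 ⟨hj, Finset.mem_univ j⟩))
  pref_irrefl := G.pref_irrefl
  pref_trans := G.pref_trans
  pref_total := G.pref_total

namespace CPNet

variable {ι V : Type*}

/-- `Y` is a redundant parent of variable `i`: for every assignment (with values in the
domains) and any two domain values `y₁, y₂` of `Y`, the preference statements for `i`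
determined by overwriting the value of `Y` with `y₁` resp. `y₂` coincide. -/
def Redundant [DecidableEq ι] (N : CPNet ι V) (i Y : ι) : Prop :=
  ∀ a, N.Valid a → ∀ y₁ ∈ N.dom Y, ∀ y₂ ∈ N.dom Y,
    N.pref i (Function.update a Y y₁) = N.pref i (Function.update a Y y₂)

/-- `N.RemovesParent N' i Y y₀` : the CP-net `N'` is obtained from `N` by removing `Y`
from the parents of `i` and replacing the family of preference statements for `i`
(for the various values of `Y`) by the single one obtained by fixing the value `y₀`
of `Y`; everything else is unchanged. -/
def RemovesParent [DecidableEq ι] (N N' : CPNet ι V) (i Y : ι) (y₀ : V) : Prop :=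
  N'.dom = N.dom ∧
  N'.parents = Function.update N.parents i ((N.parents i).erase Y) ∧
  (∀ a x y, N'.pref i a x y ↔ (N.Valid a ∧ N.pref i (Function.update a Y y₀) x y)) ∧
  (∀ j, j ≠ i → N'.pref j = N.pref j)

/-- One step of reduction of a CP-net: removal of one redundant parent. -/
def ReduceStep [DecidableEq ι] (N N' : CPNet ι V) : Prop :=
  ∃ i Y, Y ∈ N.parents i ∧ N.Redundant i Y ∧ ∃ y₀ ∈ N.dom Y, N.RemovesParent N' i Y y₀

/-- A CP-net is reduced iff no parent set contains a redundant variable. -/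
def IsReduced [DecidableEq ι] (N : CPNet ι V) : Prop :=
  ∀ i Y, Y ∈ N.parents i → ¬ N.Redundant i Y

/-- `N'` is a subnet of `N`: it is obtained from `N` by removing some elements from some
variable domains, together with all preference statements referring to a removed element
(the remaining preference statements being restricted to the remaining domain values). -/
def Subnet (N' N : CPNet ι V) : Prop :=
  (∀ i, N'.dom i ⊆ N.dom i) ∧
  N'.parents = N.parents ∧
  (∀ i a x y, N'.pref i a x y ↔
      (N.pref i a x y ∧ N'.Valid a ∧ x ∈ N'.dom i ∧ y ∈ N'.dom i))

/-- `d` is a best response to the preference statement for variable `i` determined by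
the assignment `a`: it is weakly preferred to every domain value of `i`. -/
def BestResponseTo (N : CPNet ι V) (i : ι) (d : V) (a : ι → V) : Prop :=
  ∀ d' ∈ N.dom i, N.pref i a d d' ∨ d = d'

/-- `d` is never a best response for variable `i`: it is a best response to no
preference statement for `i`. -/
def NeverBestResponse (N : CPNet ι V) (i : ι) (d : V) : Prop :=
  ∀ a, N.Valid a → ¬ N.BestResponseTo i d a

/-- `N →_NBR N'` : `N'` is a proper subnet of `N` and every removed domain element is
never a best response in `N`. -/
def NBRStep (N N' : CPNet ι V) : Prop :=
  N ≠ N' ∧ N'.Subnet N ∧ ∀ i, ∀ d ∈ N.dom i, d ∉ N'.dom i → N.NeverBestResponse i d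

/-- `d'` is strictly dominated (by some domain element `d`) for variable `i`: `d` is
strictly preferred to `d'` in every preference statement for `i`. -/
def StrictlyDominated (N : CPNet ι V) (i : ι) (d' : V) : Prop :=
  ∃ d ∈ N.dom i, ∀ a, N.Valid a → N.pref i a d d'

/-- `N →_S N'` : `N'` is a proper subnet of `N` and every removed domain element is
strictly dominated in `N`. -/
def SStep (N N' : CPNet ι V) : Prop :=
  N ≠ N' ∧ N'.Subnet N ∧ ∀ i, ∀ d ∈ N.dom i, d ∉ N'.dom i → N.StrictlyDominated i d

/-- A CP-net is acyclic iff its dependency graph (with an edge from each parent to its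
child) has no directed cycle. -/
def Acyclic (N : CPNet ι V) : Prop :=
  ∀ i, ¬ Relation.TransGen (fun a b : ι => a ∈ N.parents b) i i

end CPNet

/-- An outcome of a CP-net `N` is optimal iff it is a Nash equilibrium
of the associated game `G(N)`. -/
theorem optimal_iff_nash_of_toGame {ι V : Type*} (N : CPNet ι V) (s : ι → V) :
    N.Optimal s ↔ N.toGame.NashEq s := by
  classical
  constructor
  · rintro ⟨hv, hopt⟩
    refine ⟨hv, fun i v hv' => ?_⟩
    rcases N.pref_total i s hv (s i) (hv i) v hv' with h | h | h
    · exact Or.inr h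
    · exact Or.inl h
    · exfalso
      apply hopt (Function.update s i v)
      refine Relation.TransGen.single ?_
      have hvalid : N.Valid (Function.update s i v) := fun j => by
        by_cases hji : j = i
        · subst hji; simpa using (show v ∈ N.dom j from hv')
        · simpa [Function.update_of_ne hji] using hv j
      refine ⟨hvalid, hv, i, fun j hj => Function.update_of_ne hj _ _, ?_⟩
      have := N.pref_local i (Function.update s i v) s hvalid hv
        (fun j hj => Function.update_of_ne (fun e => N.not_self_parent i (by rwa [e] at hj)) _ _)
      rw [this]
      simpa using h
  · rintro ⟨hv, hnash⟩
    refine ⟨hv, fun t hb => ?_⟩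
    obtain ⟨u, -, hu⟩ := (Relation.TransGen.tail'_iff).1 hb
    obtain ⟨huv, hsv, i, hagree, hpref⟩ := hu
    have heq : N.pref i u = N.pref i s :=
      N.pref_local i u s huv hsv
        (fun j hj => hagree j (fun e => N.not_self_parent i (by rwa [e] at hj)))
    have hpref' : N.pref i s (u i) (s i) := heq ▸ hpref
    rcases hnash i (u i) (huv i) with h | h
    · exact N.pref_irrefl i s (s i) (N.pref_trans i s _ _ _ h hpref')
    · exact N.pref_irrefl i s (s i) (h ▸ hpref')
end

section
/- Let G be a strategic game with parametrized preferences and let N(G) be the CP-net associated with G. A joint strategy is a Nash equilibrium of G if and only if it is an optimal outcome of N(G). -/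
/-- A joint strategy is a Nash equilibrium of a game `G` iff it is an
optimal outcome of the associated CP-net `N(G)`. -/
theorem nash_iff_optimal_of_toCPNet {ι V : Type*} [Fintype ι] [DecidableEq ι]
    (G : ParamGame ι V) (s : ι → V) :
    G.NashEq s ↔ G.toCPNet.Optimal s := by
  constructor
  · rintro ⟨hv, hn⟩
    refine ⟨hv, ?_⟩
    intro t hbt
    have hflip : ∃ u, G.toCPNet.WFlip u s := by
      cases hbt with
      | single h => exact ⟨t, h⟩
      | tail _ h => exact ⟨_, h⟩
    obtain ⟨u, hu, hsv, i, hagree, hpref⟩ := hflip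
    have heq : G.pref i u = G.pref i s := G.pref_indep i u s hu hsv hagree
    have hpref' : G.pref i s (u i) (s i) := heq ▸ hpref
    have hd := G.pref_dom i s _ _ hpref'
    rcases hn i (u i) hd.2.1 with h | h
    · exact G.pref_irrefl i s (s i) (G.pref_trans i s _ _ _ h hpref')
    · rw [← h] at hpref'
      exact G.pref_irrefl i s (s i) hpref'
  · rintro ⟨hv, hopt⟩
    refine ⟨hv, fun i v hvmem => ?_⟩
    rcases G.pref_total i s hv (s i) (hv i) v hvmem with h | h | h
    · exact Or.inr h
    · exact Or.inl h
    · exfalso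
      apply hopt (Function.update s i v)
      apply Relation.TransGen.single
      have htv : ∀ j, Function.update s i v j ∈ G.strat j := by
        intro j; by_cases hj : j = i
        · subst hj; simp [hvmem]
        · rw [Function.update_of_ne hj]; exact hv j
      refine ⟨htv, hv, i, fun j hj => Function.update_of_ne hj _ _, ?_⟩
      have heq : G.pref i (Function.update s i v) = G.pref i s :=
        G.pref_indep i _ s htv hv (fun j hj => Function.update_of_ne hj _ _)
      show G.pref i (Function.update s i v) (Function.update s i v i) (s i)
      rw [heq, Function.update_self]
      exact h
end

section
/- Let N be a CP-net, X_i one of its variables, and Y ∈ Pa(X_i) a redundant parent of X_i. Let N' be the CP-net obtained from N by removing Y from Pa(X_i) and replacing, for each assignment a to Pa(X_i)\{Y}, the family of preference statements X_{Pa(X_i)} = (a,y) : ≻(a,y) (y ∈ D(Y)) by the single preference statement X_{Pa(X_i)\{Y}} = a : ≻(a, y_0) for any fixed y_0 ∈ D(Y). Then the better-than relation ≻ over outcomes of N' coincides with that of N. -/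
/-- If `Y` is a redundant parent of the variable `i` of a CP-net `N`,
and `N'` is obtained from `N` by removing `Y` from the parents of `i` and merging the
corresponding preference statements (fixing any value `y₀ ∈ D(Y)`), then the better-than
relation of `N'` coincides with that of `N`. -/
theorem better_eq_of_removesParent {ι V : Type*} [DecidableEq ι]
    (N N' : CPNet ι V) (i Y : ι) (hY : Y ∈ N.parents i) (hred : N.Redundant i Y)
    (y₀ : V) (hy₀ : y₀ ∈ N.dom Y) (hN' : N.RemovesParent N' i Y y₀) :
    ∀ s t, N'.Better s t ↔ N.Better s t := by
  obtain ⟨hdom, hpar, hpi, hpj⟩ := hN'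
  have hvalid : ∀ a, N'.Valid a ↔ N.Valid a := by
    intro a; unfold CPNet.Valid; rw [hdom]
  have hprefi : ∀ a x y, N.Valid a → (N'.pref i a x y ↔ N.pref i a x y) := by
    intro a x y ha
    rw [hpi]
    have hupd : Function.update a Y (a Y) = a := Function.update_eq_self Y a
    have := hred a ha y₀ hy₀ (a Y) (ha Y)
    rw [hupd] at this
    rw [this]
    tauto
  have hflip : ∀ s t, N'.WFlip s t ↔ N.WFlip s t := by
    intro s t
    unfold CPNet.WFlip
    rw [hvalid, hvalid]
    constructor
    · rintro ⟨hs, ht, j, hj, hpref⟩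
      refine ⟨hs, ht, j, hj, ?_⟩
      by_cases hji : j = i
      · subst hji; exact (hprefi s (s j) (t j) hs).1 hpref
      · rwa [hpj j hji] at hpref
    · rintro ⟨hs, ht, j, hj, hpref⟩
      refine ⟨hs, ht, j, hj, ?_⟩
      by_cases hji : j = i
      · subst hji; exact (hprefi s (s j) (t j) hs).2 hpref
      · rwa [hpj j hji]
  intro s t
  constructor <;> intro h
  · exact Relation.TransGen.mono (fun a b hab => (hflip a b).1 hab) s t h
  · exact Relation.TransGen.mono (fun a b hab => (hflip a b).2 hab) s t h
end

section
/- Each reduced CP-net N is the reduced CP-net corresponding to the game G(N); formally, N = r(N(G(N))). -/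
-- Invariant preserved along the reduction chain.
def CPNet.Inv {ι V : Type*} [DecidableEq ι] (N P : CPNet ι V) : Prop :=
  P.dom = N.dom ∧ P.pref = N.pref ∧ ∀ i, N.parents i ⊆ P.parents i

theorem CPNet.inv_step {ι V : Type*} [DecidableEq ι]
    {N P P' : CPNet ι V} (hN : N.IsReduced) (hinv : N.Inv P)
    (hstep : CPNet.ReduceStep P P') : N.Inv P' := by
  obtain ⟨hdom, hpref, hpar⟩ := hinv
  obtain ⟨i, Y, hYmem, hredY, y₀, hy₀, hdom', hpar', hprefi, hprefj⟩ := hstep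
  have hValid : ∀ a, P.Valid a ↔ N.Valid a := by
    intro a; unfold CPNet.Valid; rw [hdom]
  -- Y is redundant in N, hence Y ∉ N.parents i
  have hredN : N.Redundant i Y := by
    intro a ha y₁ hy₁ y₂ hy₂
    have := hredY a ((hValid a).2 ha) y₁ (by rw [hdom]; exact hy₁) y₂ (by rw [hdom]; exact hy₂)
    rwa [hpref] at this
  have hYnot : Y ∉ N.parents i := fun hmem => hN i Y hmem hredN
  refine ⟨hdom' ▸ hdom, ?_, ?_⟩
  · -- pref preserved
    funext j a x y
    by_cases hj : j = i
    · subst hj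
      apply propext
      rw [hprefi a x y]
      constructor
      · rintro ⟨ha, hp⟩
        have key := hredY a ha y₀ hy₀ (a Y) (ha Y)
        rw [Function.update_eq_self] at key
        rw [key, hpref] at hp
        exact hp
      · intro hp
        have ha : P.Valid a := (hValid a).2 (N.pref_dom _ _ _ _ hp).1
        refine ⟨ha, ?_⟩
        have key := hredY a ha y₀ hy₀ (a Y) (ha Y)
        rw [Function.update_eq_self] at key
        rw [key, hpref]; exact hp
    · rw [hprefj j hj, hpref]
  · -- parents inclusion
    intro j
    rw [hpar']
    by_cases hj : j = i
    · subst hj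
      rw [Function.update_self]
      intro Z hZ
      refine Finset.mem_erase.2 ⟨?_, hpar j hZ⟩
      rintro rfl; exact hYnot hZ
    · rw [Function.update_of_ne hj]; exact hpar j

/-- Each reduced CP-net `N` is the reduced CP-net corresponding to the
game `G(N)`: if `N` is reduced and `N'` is a reduced form of `N(G(N))` (obtained by
iteratively removing redundant parents, until no redundant parent is left), then
`N' = N`, i.e. `N = r(N(G(N)))`. -/
theorem reduced_toCPNet_toGame {ι V : Type*} [Fintype ι] [DecidableEq ι]
    (N N' : CPNet ι V) (hN : N.IsReduced)
    (h : Relation.ReflTransGen CPNet.ReduceStep N.toGame.toCPNet N')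
    (hred : N'.IsReduced) :
    N' = N := by
  have hinv : N.Inv N' := by
    clear hred
    induction h with
    | refl =>
        refine ⟨rfl, rfl, fun i Z hZ => ?_⟩
        exact Finset.mem_erase.2 ⟨fun hZi => N.not_self_parent i (hZi ▸ hZ),
          Finset.mem_univ Z⟩
    | tail _ step ih => exact CPNet.inv_step hN ih step
  obtain ⟨hdom, hpref, hpar⟩ := hinv
  -- parents coincide
  have hpar' : N'.parents = N.parents := by
    funext i
    apply Finset.Subset.antisymm _ (hpar i)
    intro Y hY
    by_contra hYnot
    apply hred i Y hY
    intro a ha y₁ hy₁ y₂ hy₂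
    rw [hpref]
    have ha' : N.Valid a := by intro j; rw [← hdom]; exact ha j
    have h1 : ∀ j, Function.update a Y y₁ j ∈ N.dom j := by
      intro j; rcases eq_or_ne j Y with rfl | hjY
      · rw [Function.update_self, ← hdom]; exact hy₁
      · rw [Function.update_of_ne hjY]; exact ha' j
    have h2 : ∀ j, Function.update a Y y₂ j ∈ N.dom j := by
      intro j; rcases eq_or_ne j Y with rfl | hjY
      · rw [Function.update_self, ← hdom]; exact hy₂
      · rw [Function.update_of_ne hjY]; exact ha' j
    exact N.pref_local i _ _ h1 h2 (fun j hj => by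
      have hjY : j ≠ Y := fun hjY => hYnot (hjY ▸ hj)
      rw [Function.update_of_ne hjY, Function.update_of_ne hjY])
  cases N with
  | mk d dn p nsp pr prd prl pri prt prtot =>
    cases N' with
    | mk d' dn' p' nsp' pr' prd' prl' pri' prt' prtot' =>
      simp only at hdom hpref hpar'
      subst hdom; subst hpref; subst hpar'
      rfl
end

section
/- Suppose the CP-net N' is obtained from the CP-net N by an iterated elimination of never best responses, i.e., N →*_NBR N'. Then an outcome s of N' is an optimal outcome of N if and only if it is an optimal outcome of N'. -/
private lemma exists_pref_max {ι V : Type*} (N : CPNet ι V) (u : ι → V) (i : ι) :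
    ∃ m ∈ N.dom i, ∀ x ∈ N.dom i, ¬ N.pref i u x m := by
  let r : {x : V // x ∈ N.dom i} → {x : V // x ∈ N.dom i} → Prop :=
    fun x y => N.pref i u x.1 y.1
  haveI : IsTrans _ r := ⟨fun a b c => N.pref_trans i u a.1 b.1 c.1⟩
  haveI : IsIrrefl _ r := ⟨fun a => N.pref_irrefl i u a.1⟩
  obtain ⟨x0, hx0⟩ := N.dom_nonempty i
  obtain ⟨m, -, hm⟩ := (Finite.wellFounded_of_trans_of_irrefl r).has_min
    Set.univ ⟨⟨x0, hx0⟩, trivial⟩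
  exact ⟨m.1, m.2, fun x hx hp => hm ⟨x, hx⟩ trivial hp⟩

private lemma nbr_step_optimal {ι V : Type*} (N N' : CPNet ι V)
    (h : CPNet.NBRStep N N') (s : ι → V) (hs : N'.Valid s) :
    N.Optimal s ↔ N'.Optimal s := by
  classical
  obtain ⟨-, ⟨hdom, -, hpref⟩, hnbr⟩ := h
  have hvalid : ∀ a, N'.Valid a → N.Valid a := fun a ha j => hdom j (ha j)
  have hflip : ∀ a b, N'.WFlip a b → N.WFlip a b := by
    rintro a b ⟨ha, hb, i, hj, hp⟩
    exact ⟨hvalid a ha, hvalid b hb, i, hj, ((hpref i a _ _).mp hp).1⟩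
  constructor
  · rintro ⟨-, hopt⟩
    exact ⟨hs, fun t ht => hopt t (Relation.TransGen.mono hflip _ _ ht)⟩
  · rintro ⟨-, hopt⟩
    refine ⟨hvalid s hs, fun t ht => ?_⟩
    obtain ⟨u, -, hu⟩ := (Relation.TransGen.tail'_iff).mp ht
    obtain ⟨hu1, -, i, hagree, hp⟩ := hu
    obtain ⟨m, hmdom, hmmax⟩ := exists_pref_max N u i
    have hmbr : N.BestResponseTo i m u := by
      intro d' hd'
      rcases N.pref_total i u hu1 m hmdom d' hd' with h1 | h1 | h1
      · exact Or.inr h1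
      · exact Or.inl h1
      · exact absurd h1 (hmmax d' hd')
    have hm' : m ∈ N'.dom i := by
      by_contra hmn
      exact hnbr i m hmdom hmn u hu1 hmbr
    have hpm : N.pref i u m (s i) := by
      rcases hmbr (s i) (hdom i (hs i)) with h1 | h1
      · exact h1
      · exact absurd (h1.symm ▸ hp) (hmmax (u i) (hu1 i))
    set t' := Function.update s i m with ht'
    have ht'valid : N'.Valid t' := by
      intro j
      by_cases hji : j = i
      · subst hji; simpa [ht'] using hm'
      · simpa [ht', Function.update_of_ne hji] using hs j
    have hNt'valid : N.Valid t' := hvalid _ ht'valid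
    have heq : N.pref i u = N.pref i t' := by
      apply N.pref_local i u t' hu1 hNt'valid
      intro j hjp
      have hji : j ≠ i := fun hji => N.not_self_parent i (hji ▸ hjp)
      rw [hagree j hji, ht', Function.update_of_ne hji]
    have hpm' : N'.pref i t' m (s i) :=
      (hpref i t' m (s i)).mpr ⟨heq ▸ hpm, ht'valid, hm', hs i⟩
    have hw : N'.WFlip t' s := by
      refine ⟨ht'valid, hs, i, fun j hji => by simp [ht', Function.update_of_ne hji], ?_⟩
      simpa [ht'] using hpm'
    exact hopt t' (Relation.TransGen.single hw)

/-- If `N →*_NBR N'`, i.e. the CP-net `N'` is obtained from the CP-net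
`N` by an iterated elimination of never best responses, then an outcome `s` of `N'` is
an optimal outcome of `N` iff it is an optimal outcome of `N'`. -/
theorem optimal_iff_of_nbrSteps {ι V : Type*} (N N' : CPNet ι V)
    (h : Relation.ReflTransGen CPNet.NBRStep N N') (s : ι → V) (hs : N'.Valid s) :
    N.Optimal s ↔ N'.Optimal s := by
  revert hs
  induction h with
  | refl => exact fun _ => Iff.rfl
  | tail h1 h2 ih =>
    intro hs
    have hsM := fun j => h2.2.1.1 j (hs j)
    exact (ih hsM).trans (nbr_step_optimal _ _ h2 s hs)
end

section
/- Suppose N →*_NBR N', i.e., the CP-net N' is obtained from the CP-net N by an iterated elimination of never best responses, and suppose that each variable in N' has a singleton domain. Then the unique outcome of N' is the unique optimal outcome of N. -/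
namespace CPNetProof

open CPNet

variable {ι V : Type*}

lemma exists_max (r : V → V → Prop)
    (htrans : ∀ x y z, r x y → r y z → r x z) :
    ∀ D : Finset V, D.Nonempty →
      (∀ x ∈ D, ∀ y ∈ D, x = y ∨ r x y ∨ r y x) →
      ∃ m ∈ D, ∀ v ∈ D, r m v ∨ m = v := by
  classical
  intro D
  induction D using Finset.induction_on with
  | empty => intro h; exact absurd h (by simp)
  | @insert a D ha ih =>
    intro _ htot
    rcases D.eq_empty_or_nonempty with rfl | hD
    · exact ⟨a, by simp, by simp⟩
    · obtain ⟨m, hm, hmax⟩ := ih hD (fun x hx y hy =>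
        htot x (Finset.mem_insert_of_mem hx) y (Finset.mem_insert_of_mem hy))
      rcases htot a (Finset.mem_insert_self a D) m (Finset.mem_insert_of_mem hm) with
        rfl | ham | hma
      · exact absurd hm ha
      · refine ⟨a, Finset.mem_insert_self _ _, fun v hv => ?_⟩
        rcases Finset.mem_insert.1 hv with rfl | hv
        · exact Or.inr rfl
        · rcases hmax v hv with h | rfl
          · exact Or.inl (htrans _ _ _ ham h)
          · exact Or.inl ham
      · refine ⟨m, Finset.mem_insert_of_mem hm, fun v hv => ?_⟩
        rcases Finset.mem_insert.1 hv with rfl | hv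
        · exact Or.inl hma
        · exact hmax v hv

/-- `s` is a valid outcome each of whose components is a best response
(a Nash-equilibrium-like condition). -/
def GoodP (N : CPNet ι V) (s : ι → V) : Prop :=
  N.Valid s ∧ ∀ i, ∀ v ∈ N.dom i, N.pref i s (s i) v ∨ s i = v

lemma optimal_iff (N : CPNet ι V) (s : ι → V) :
    N.Optimal s ↔ GoodP N s := by
  classical
  constructor
  · rintro ⟨hval, hopt⟩
    refine ⟨hval, fun i v hv => ?_⟩
    by_contra hc
    push_neg at hc
    obtain ⟨h1, h2⟩ := hc
    rcases N.pref_total i s hval (s i) (hval i) v hv with h | h | h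
    · exact h2 h
    · exact h1 h
    · -- v is preferred to `s i`; flip gives a better outcome
      set u : ι → V := Function.update s i v with hu
      have huval : N.Valid u := by
        intro j
        by_cases hj : j = i
        · subst hj; simpa [hu] using hv
        · simpa [hu, Function.update_of_ne hj] using hval j
      have hagree : ∀ j, j ≠ i → u j = s j := fun j hj => by
        simp [hu, Function.update_of_ne hj]
      have hpe : N.pref i u = N.pref i s :=
        N.pref_local i u s huval hval (fun j hj =>
          hagree j (fun hji => N.not_self_parent i (hji ▸ hj)))
      have hflip : N.WFlip u s := by
        refine ⟨huval, hval, i, hagree, ?_⟩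
        have : u i = v := by simp [hu]
        rw [hpe, this]; exact h
      exact hopt u (Relation.TransGen.single hflip)
  · rintro ⟨hval, hbest⟩
    refine ⟨hval, fun t hbet => ?_⟩
    have hlast : ∃ u, N.WFlip u s := by
      cases hbet with
      | single h => exact ⟨t, h⟩
      | tail _ h => exact ⟨_, h⟩
    obtain ⟨u, huval, _, i, hagree, hpref⟩ := hlast
    have hpe : N.pref i u = N.pref i s :=
      N.pref_local i u s huval hval (fun j hj =>
        hagree j (fun hji => N.not_self_parent i (hji ▸ hj)))
    rw [hpe] at hpref
    have hui : u i ∈ N.dom i := huval i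
    rcases hbest i (u i) hui with h | h
    · exact N.pref_irrefl i s (s i) (N.pref_trans i s _ _ _ h hpref)
    · rw [← h] at hpref
      exact N.pref_irrefl i s (s i) hpref

lemma goodP_of_step {N N' : CPNet ι V} (h : N.NBRStep N') {s : ι → V}
    (hp : GoodP N s) : GoodP N' s := by
  obtain ⟨-, ⟨hsub, -, hpref⟩, hnbr⟩ := h
  obtain ⟨hval, hbest⟩ := hp
  have hval' : N'.Valid s := by
    intro i
    by_contra hsi
    exact hnbr i (s i) (hval i) hsi s hval (fun d' hd' => hbest i d' hd')
  refine ⟨hval', fun i v hv => ?_⟩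
  rcases hbest i v (hsub i hv) with h | h
  · exact Or.inl ((hpref i s (s i) v).2 ⟨h, hval', hval' i, hv⟩)
  · exact Or.inr h

lemma goodP_of_step' {N N' : CPNet ι V} (h : N.NBRStep N') {s : ι → V}
    (hp : GoodP N' s) : GoodP N s := by
  obtain ⟨-, ⟨hsub, -, hpref⟩, hnbr⟩ := h
  obtain ⟨hval', hbest'⟩ := hp
  have hval : N.Valid s := fun i => hsub i (hval' i)
  refine ⟨hval, fun i v hv => ?_⟩
  obtain ⟨m, hm, hmax⟩ := exists_max (N.pref i s)
    (N.pref_trans i s) (N.dom i) (N.dom_nonempty i)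
    (N.pref_total i s hval)
  have hm' : m ∈ N'.dom i := by
    by_contra hc
    exact hnbr i m hm hc s hval (fun d' hd' => hmax d' hd')
  rcases hbest' i m hm' with h | h
  · have hsm : N.pref i s (s i) m := ((hpref i s (s i) m).1 h).1
    rcases hmax v hv with h2 | rfl
    · exact Or.inl (N.pref_trans i s _ _ _ hsm h2)
    · exact Or.inl hsm
  · rw [h]; exact hmax v hv

lemma goodP_iff_of_rtg {N N' : CPNet ι V}
    (h : Relation.ReflTransGen CPNet.NBRStep N N') (s : ι → V) :
    GoodP N s ↔ GoodP N' s := by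
  induction h with
  | refl => exact Iff.rfl
  | tail _ step ih => exact ih.trans ⟨goodP_of_step step, goodP_of_step' step⟩

end CPNetProof

/-- If `N →*_NBR N'` and each variable of `N'` has a singleton domain,
then the unique outcome of `N'` is the unique optimal outcome of `N`. -/
theorem unique_optimal_of_nbrSteps_singleton {ι V : Type*} (N N' : CPNet ι V)
    (h : Relation.ReflTransGen CPNet.NBRStep N N')
    (hsing : ∀ i, ∃ v, N'.dom i = {v}) (s : ι → V) (hs : N'.Valid s) :
    N.Optimal s ∧ ∀ t, N.Optimal t → t = s := by
  classical
  have hgood' : CPNetProof.GoodP N' s := by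
    refine ⟨hs, fun i v hv => ?_⟩
    obtain ⟨w, hw⟩ := hsing i
    have h1 : v = w := by simpa [hw] using hv
    have h2 : s i = w := by simpa [hw] using hs i
    exact Or.inr (h2.trans h1.symm)
  have hgood : CPNetProof.GoodP N s := (CPNetProof.goodP_iff_of_rtg h s).2 hgood'
  refine ⟨(CPNetProof.optimal_iff N s).2 hgood, fun t ht => ?_⟩
  have hgt' : CPNetProof.GoodP N' t :=
    (CPNetProof.goodP_iff_of_rtg h t).1 ((CPNetProof.optimal_iff N t).1 ht)
  funext i
  obtain ⟨w, hw⟩ := hsing i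
  have h1 : t i = w := by simpa [hw] using hgt'.1 i
  have h2 : s i = w := by simpa [hw] using hs i
  exact h1.trans h2.symm
end

section
/- All iterated eliminations of never best responses from a CP-net N yield the same final outcome: if N →*_NBR N_1 and N →*_NBR N_2 where N_1 and N_2 admit no further elimination of never best responses, then N_1 = N_2. -/
namespace CPNetNBR

open CPNet

variable {ι V : Type*}

/-- A finite nonempty set linearly ordered by a transitive relation has a top element. -/
lemma exists_top (r : V → V → Prop)
    (htrans : ∀ x y z, r x y → r y z → r x z)
    (s : Finset V) (hs : s.Nonempty)
    (htot : ∀ x ∈ s, ∀ y ∈ s, x = y ∨ r x y ∨ r y x) :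
    ∃ m ∈ s, ∀ x ∈ s, r m x ∨ m = x := by
  classical
  induction s using Finset.induction_on with
  | empty => exact absurd hs (by simp)
  | @insert a s ha ih =>
    rcases s.eq_empty_or_nonempty with rfl | hne
    · refine ⟨a, Finset.mem_insert_self a _, fun x hx => ?_⟩
      rcases Finset.mem_insert.1 hx with rfl | hx
      · exact Or.inr rfl
      · simp at hx
    · obtain ⟨m, hm, hmax⟩ := ih hne
        (fun x hx y hy => htot x (Finset.mem_insert_of_mem hx) y (Finset.mem_insert_of_mem hy))
      rcases htot a (Finset.mem_insert_self a s) m (Finset.mem_insert_of_mem hm) with h | h | h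
      · subst h
        refine ⟨a, Finset.mem_insert_self a s, fun x hx => ?_⟩
        rcases Finset.mem_insert.1 hx with rfl | hx
        · exact Or.inr rfl
        · exact hmax x hx
      · refine ⟨a, Finset.mem_insert_self a s, fun x hx => ?_⟩
        rcases Finset.mem_insert.1 hx with rfl | hx
        · exact Or.inr rfl
        · rcases hmax x hx with h2 | rfl
          · exact Or.inl (htrans _ _ _ h h2)
          · exact Or.inl h
      · refine ⟨m, Finset.mem_insert_of_mem hm, fun x hx => ?_⟩
        rcases Finset.mem_insert.1 hx with rfl | hx
        · exact Or.inl h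
        · exact hmax x hx

lemma exists_best (N : CPNet ι V) (i : ι) (a : ι → V) (ha : N.Valid a) :
    ∃ m ∈ N.dom i, N.BestResponseTo i m a :=
  exists_top (N.pref i a) (fun x y z => N.pref_trans i a x y z) (N.dom i)
    (N.dom_nonempty i) (fun x hx y hy => N.pref_total i a ha x hx y hy)

lemma exists_valid (N : CPNet ι V) : ∃ a, N.Valid a :=
  ⟨fun j => (N.dom_nonempty j).choose, fun j => (N.dom_nonempty j).choose_spec⟩

/-- Heredity of never-best-response along a subnet from which only
never-best-response elements have been removed. -/
lemma heredity {N M : CPNet ι V} (hs : M.Subnet N)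
    (hrem : ∀ i, ∀ d ∈ N.dom i, d ∉ M.dom i → N.NeverBestResponse i d)
    (i : ι) (d : V) (hd : d ∈ M.dom i) (hnbr : N.NeverBestResponse i d) :
    M.NeverBestResponse i d := by
  intro a ha hbest
  have haN : N.Valid a := fun j => hs.1 j (ha j)
  obtain ⟨m, hm, hmb⟩ := exists_best N i a haN
  have hmM : m ∈ M.dom i := by
    by_contra h
    exact hrem i m hm h a haN hmb
  rcases hbest m hmM with h | h
  · have hNdm : N.pref i a d m := ((hs.2.2 i a d m).1 h).1
    rcases hmb d (hs.1 i hd) with h2 | h2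
    · exact N.pref_irrefl i a d (N.pref_trans i a d m d hNdm h2)
    · exact N.pref_irrefl i a d (h2 ▸ hNdm)
  · exact hnbr a haN (h ▸ hmb)

/-- The intersection of two subnets from which only never-best-response elements
have been removed. -/
noncomputable def interNet (N A B : CPNet ι V) (hA : A.Subnet N) (hB : B.Subnet N)
    (hrA : ∀ i, ∀ d ∈ N.dom i, d ∉ A.dom i → N.NeverBestResponse i d)
    (hrB : ∀ i, ∀ d ∈ N.dom i, d ∉ B.dom i → N.NeverBestResponse i d) : CPNet ι V :=
  letI := Classical.decEq V
  { dom := fun i => A.dom i ∩ B.dom i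
    dom_nonempty := by
      intro i
      obtain ⟨a, ha⟩ := exists_valid N
      obtain ⟨m, hm, hmb⟩ := exists_best N i a ha
      have hmA : m ∈ A.dom i := by
        by_contra h; exact hrA i m hm h a ha hmb
      have hmB : m ∈ B.dom i := by
        by_contra h; exact hrB i m hm h a ha hmb
      exact ⟨m, Finset.mem_inter.2 ⟨hmA, hmB⟩⟩
    parents := N.parents
    not_self_parent := N.not_self_parent
    pref := fun i a x y => N.pref i a x y ∧ (∀ j, a j ∈ A.dom j ∩ B.dom j) ∧
      x ∈ A.dom i ∩ B.dom i ∧ y ∈ A.dom i ∩ B.dom i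
    pref_dom := fun _ _ _ _ h => h.2
    pref_local := by
      intro i a b ha hb hab
      have haN : ∀ j, a j ∈ N.dom j := fun j => hA.1 j (Finset.mem_inter.1 (ha j)).1
      have hbN : ∀ j, b j ∈ N.dom j := fun j => hA.1 j (Finset.mem_inter.1 (hb j)).1
      have h := N.pref_local i a b haN hbN hab
      funext x y
      apply propext
      constructor
      · rintro ⟨hp, -, hx, hy⟩
        exact ⟨h ▸ hp, hb, hx, hy⟩
      · rintro ⟨hp, -, hx, hy⟩
        exact ⟨h ▸ hp, ha, hx, hy⟩
    pref_irrefl := fun i a x h => N.pref_irrefl i a x h.1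
    pref_trans := fun i a x y z h1 h2 =>
      ⟨N.pref_trans i a x y z h1.1 h2.1, h1.2.1, h1.2.2.1, h2.2.2.2⟩
    pref_total := by
      intro i a ha x hx y hy
      have haN : ∀ j, a j ∈ N.dom j := fun j => hA.1 j (Finset.mem_inter.1 (ha j)).1
      rcases N.pref_total i a haN x (hA.1 i (Finset.mem_inter.1 hx).1)
        y (hA.1 i (Finset.mem_inter.1 hy).1) with h | h | h
      · exact Or.inl h
      · exact Or.inr (Or.inl ⟨h, ha, hx, hy⟩)
      · exact Or.inr (Or.inr ⟨h, ha, hy, hx⟩) }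

lemma interNet_left (N A B : CPNet ι V) (hA : A.Subnet N) (hB : B.Subnet N)
    (hrA : ∀ i, ∀ d ∈ N.dom i, d ∉ A.dom i → N.NeverBestResponse i d)
    (hrB : ∀ i, ∀ d ∈ N.dom i, d ∉ B.dom i → N.NeverBestResponse i d) :
    (interNet N A B hA hB hrA hrB).Subnet A ∧
      (∀ i, ∀ d ∈ A.dom i, d ∉ (interNet N A B hA hB hrA hrB).dom i →
        A.NeverBestResponse i d) := by
  classical
  set C := interNet N A B hA hB hrA hrB with hC
  have hdomC : ∀ i, C.dom i = A.dom i ∩ B.dom i := fun i => rfl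
  have hprefC : ∀ i a x y, C.pref i a x y ↔
      (N.pref i a x y ∧ (∀ j, a j ∈ A.dom j ∩ B.dom j) ∧
        x ∈ A.dom i ∩ B.dom i ∧ y ∈ A.dom i ∩ B.dom i) := fun i a x y => Iff.rfl
  have hsub : C.Subnet A := by
    refine ⟨fun i => ?_, ?_, fun i a x y => ?_⟩
    · rw [hdomC]; exact Finset.inter_subset_left
    · exact hA.2.1.symm
    · rw [hprefC]
      constructor
      · rintro ⟨hp, hv, hx, hy⟩
        refine ⟨(hA.2.2 i a x y).2 ⟨hp, fun j => (Finset.mem_inter.1 (hv j)).1,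
          (Finset.mem_inter.1 hx).1, (Finset.mem_inter.1 hy).1⟩, hv, hx, hy⟩
      · rintro ⟨hp, hv, hx, hy⟩
        exact ⟨((hA.2.2 i a x y).1 hp).1, hv, hx, hy⟩
  refine ⟨hsub, fun i d hdA hdC => ?_⟩
  have hdB : d ∉ B.dom i := fun hdB => hdC (Finset.mem_inter.2 ⟨hdA, hdB⟩)
  have hdN : d ∈ N.dom i := hA.1 i hdA
  exact heredity hA hrA i d hdA (hrB i d hdN hdB)

lemma interNet_right (N A B : CPNet ι V) (hA : A.Subnet N) (hB : B.Subnet N)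
    (hrA : ∀ i, ∀ d ∈ N.dom i, d ∉ A.dom i → N.NeverBestResponse i d)
    (hrB : ∀ i, ∀ d ∈ N.dom i, d ∉ B.dom i → N.NeverBestResponse i d) :
    (interNet N A B hA hB hrA hrB).Subnet B ∧
      (∀ i, ∀ d ∈ B.dom i, d ∉ (interNet N A B hA hB hrA hrB).dom i →
        B.NeverBestResponse i d) := by
  classical
  set C := interNet N A B hA hB hrA hrB with hC
  have hdomC : ∀ i, C.dom i = A.dom i ∩ B.dom i := fun i => rfl
  have hprefC : ∀ i a x y, C.pref i a x y ↔
      (N.pref i a x y ∧ (∀ j, a j ∈ A.dom j ∩ B.dom j) ∧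
        x ∈ A.dom i ∩ B.dom i ∧ y ∈ A.dom i ∩ B.dom i) := fun i a x y => Iff.rfl
  have hsub : C.Subnet B := by
    refine ⟨fun i => ?_, ?_, fun i a x y => ?_⟩
    · rw [hdomC]; exact Finset.inter_subset_right
    · exact hB.2.1.symm
    · rw [hprefC]
      constructor
      · rintro ⟨hp, hv, hx, hy⟩
        refine ⟨(hB.2.2 i a x y).2 ⟨hp, fun j => (Finset.mem_inter.1 (hv j)).2,
          (Finset.mem_inter.1 hx).2, (Finset.mem_inter.1 hy).2⟩, hv, hx, hy⟩
      · rintro ⟨hp, hv, hx, hy⟩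
        exact ⟨((hB.2.2 i a x y).1 hp).1, hv, hx, hy⟩
  refine ⟨hsub, fun i d hdB hdC => ?_⟩
  have hdA : d ∉ A.dom i := fun hdA => hdC (Finset.mem_inter.2 ⟨hdA, hdB⟩)
  have hdN : d ∈ N.dom i := hB.1 i hdB
  exact heredity hB hrB i d hdB (hrA i d hdN hdA)

lemma semiconfluent (N A B : CPNet ι V) (hA : N.NBRStep A) (hB : N.NBRStep B) :
    ∃ D, Relation.ReflGen CPNet.NBRStep A D ∧
      Relation.ReflTransGen CPNet.NBRStep B D := by
  classical
  obtain ⟨-, hsA, hrA⟩ := hA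
  obtain ⟨-, hsB, hrB⟩ := hB
  set C := interNet N A B hsA hsB hrA hrB with hC
  obtain ⟨hsubA, hremA⟩ := interNet_left N A B hsA hsB hrA hrB
  obtain ⟨hsubB, hremB⟩ := interNet_right N A B hsA hsB hrA hrB
  refine ⟨C, ?_, ?_⟩
  · by_cases h : A = C
    · exact h ▸ Relation.ReflGen.refl
    · exact Relation.ReflGen.single ⟨h, hsubA, hremA⟩
  · by_cases h : B = C
    · exact h ▸ Relation.ReflTransGen.refl
    · exact Relation.ReflTransGen.single ⟨h, hsubB, hremB⟩

lemma terminal_rtg {X D : CPNet ι V} (t : ∀ M, ¬ X.NBRStep M)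
    (h : Relation.ReflTransGen CPNet.NBRStep X D) : X = D := by
  rcases Relation.ReflTransGen.cases_head h with rfl | ⟨c, hc, -⟩
  · rfl
  · exact absurd hc (t c)

end CPNetNBR

/-- All iterated eliminations of never best responses from a CP-net `N`
yield the same final outcome: if `N →*_NBR N₁` and `N →*_NBR N₂` where `N₁` and `N₂`
admit no further elimination of never best responses, then `N₁ = N₂`. -/
theorem nbrSteps_unique_normal_form {ι V : Type*} [Fintype ι] (N N₁ N₂ : CPNet ι V)
    (h1 : Relation.ReflTransGen CPNet.NBRStep N N₁)
    (h2 : Relation.ReflTransGen CPNet.NBRStep N N₂)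
    (t1 : ∀ M, ¬ N₁.NBRStep M) (t2 : ∀ M, ¬ N₂.NBRStep M) :
    N₁ = N₂ := by
  obtain ⟨D, hD1, hD2⟩ := Relation.church_rosser
    (fun a b c hab hac => CPNetNBR.semiconfluent a b c hab hac) h1 h2
  rw [CPNetNBR.terminal_rtg t1 hD1, CPNetNBR.terminal_rtg t2 hD2]
end

section
/- For each acyclic CP-net N there exists a unique subnet N' in which every variable has a singleton domain such that N →*_NBR N'. -/
namespace CPNet

variable {ι V : Type*}

lemma exists_max_rel (p : V → V → Prop)
    (htrans : ∀ x y z, p x y → p y z → p x z) :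
    ∀ s : Finset V, (∀ x ∈ s, ∀ y ∈ s, x = y ∨ p x y ∨ p y x) → s.Nonempty →
      ∃ m ∈ s, ∀ x ∈ s, p m x ∨ m = x := by
  classical
  intro s
  induction s using Finset.induction_on with
  | empty => intro _ h; exact absurd h (by simp)
  | @insert a s ha ih =>
    intro htot _
    rcases s.eq_empty_or_nonempty with rfl | hsne
    · exact ⟨a, by simp, by simp⟩
    · obtain ⟨m, hm, hmax⟩ := ih (fun x hx y hy =>
        htot x (Finset.mem_insert_of_mem hx) y (Finset.mem_insert_of_mem hy)) hsne
      rcases htot a (Finset.mem_insert_self a s) m (Finset.mem_insert_of_mem hm)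
        with h | h | h
      · subst h; exact absurd hm ha
      · refine ⟨a, Finset.mem_insert_self a s, ?_⟩
        intro x hx
        rcases Finset.mem_insert.1 hx with rfl | hx
        · exact Or.inr rfl
        · rcases hmax x hx with h' | rfl
          · exact Or.inl (htrans _ _ _ h h')
          · exact Or.inl h
      · refine ⟨m, Finset.mem_insert_of_mem hm, ?_⟩
        intro x hx
        rcases Finset.mem_insert.1 hx with rfl | hx
        · exact Or.inl h
        · exact hmax x hx

noncomputable def pick (N : CPNet ι V) (i : ι) : V := (N.dom_nonempty i).choose

lemma pick_mem (N : CPNet ι V) (i : ι) : N.pick i ∈ N.dom i :=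
  (N.dom_nonempty i).choose_spec

open Classical in
noncomputable def best (N : CPNet ι V) (i : ι) (a : ι → V) : V :=
  if h : N.Valid a then
    (exists_max_rel (N.pref i a) (N.pref_trans i a) (N.dom i)
      (N.pref_total i a h) (N.dom_nonempty i)).choose
  else N.pick i

lemma best_mem (N : CPNet ι V) (i : ι) (a : ι → V) : N.best i a ∈ N.dom i := by
  unfold best
  split
  · rename_i h
    exact (exists_max_rel (N.pref i a) (N.pref_trans i a) (N.dom i)
      (N.pref_total i a h) (N.dom_nonempty i)).choose_spec.1
  · exact N.pick_mem i

lemma best_spec (N : CPNet ι V) (i : ι) (a : ι → V) (h : N.Valid a) :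
    ∀ x ∈ N.dom i, N.pref i a (N.best i a) x ∨ N.best i a = x := by
  unfold best
  rw [dif_pos h]
  exact (exists_max_rel (N.pref i a) (N.pref_trans i a) (N.dom i)
    (N.pref_total i a h) (N.dom_nonempty i)).choose_spec.2

noncomputable def opt [DecidableEq ι] (N : CPNet ι V)
    (wf : WellFounded (fun a b : ι => a ∈ N.parents b)) : ι → V :=
  wf.fix (fun i f => N.best i (fun j => if h : j ∈ N.parents i then f j h else N.pick j))

lemma opt_eq [DecidableEq ι] (N : CPNet ι V)
    (wf : WellFounded (fun a b : ι => a ∈ N.parents b)) (i : ι) :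
    N.opt wf i =
      N.best i (fun j => if h : j ∈ N.parents i then N.opt wf j else N.pick j) := by
  unfold opt
  rw [WellFounded.fix_eq]

lemma opt_mem [DecidableEq ι] (N : CPNet ι V)
    (wf : WellFounded (fun a b : ι => a ∈ N.parents b)) (i : ι) :
    N.opt wf i ∈ N.dom i := by
  rw [opt_eq]
  exact N.best_mem _ _

lemma opt_best [DecidableEq ι] (N : CPNet ι V)
    (wf : WellFounded (fun a b : ι => a ∈ N.parents b)) (i : ι) (a : ι → V)
    (ha : N.Valid a) (hpar : ∀ j ∈ N.parents i, a j = N.opt wf j) :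
    N.BestResponseTo i (N.opt wf i) a := by
  intro d' hd'
  have haux : N.Valid (fun j => if h : j ∈ N.parents i then N.opt wf j else N.pick j) := by
    intro j
    by_cases h : j ∈ N.parents i
    · simp only [dif_pos h]; exact N.opt_mem wf j
    · simp only [dif_neg h]; exact N.pick_mem j
  have hloc : N.pref i a =
      N.pref i (fun j => if h : j ∈ N.parents i then N.opt wf j else N.pick j) :=
    N.pref_local i a _ ha haux (fun j hj => by simp only [dif_pos hj]; exact hpar j hj)
  rw [hloc, opt_eq]
  exact N.best_spec i _ haux d' hd'

def restrict (N : CPNet ι V) (D : ι → Finset V) (hD : ∀ i, D i ⊆ N.dom i)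
    (hne : ∀ i, (D i).Nonempty) : CPNet ι V where
  dom := D
  dom_nonempty := hne
  parents := N.parents
  not_self_parent := N.not_self_parent
  pref := fun i a x y => N.pref i a x y ∧ (∀ j, a j ∈ D j) ∧ x ∈ D i ∧ y ∈ D i
  pref_dom := fun _ _ _ _ h => h.2
  pref_local := fun i a b ha hb hab => by
    have h := N.pref_local i a b (fun j => hD j (ha j)) (fun j => hD j (hb j)) hab
    funext x y
    apply propext
    constructor
    · rintro ⟨hp, -, hx, hy⟩
      refine ⟨?_, hb, hx, hy⟩
      rw [← h]; exact hp
    · rintro ⟨hp, -, hx, hy⟩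
      refine ⟨?_, ha, hx, hy⟩
      rw [h]; exact hp
  pref_irrefl := fun i a x h => N.pref_irrefl i a x h.1
  pref_trans := fun i a x y z h1 h2 =>
    ⟨N.pref_trans i a x y z h1.1 h2.1, h1.2.1, h1.2.2.1, h2.2.2.2⟩
  pref_total := fun i a ha x hx y hy => by
    rcases N.pref_total i a (fun j => hD j (ha j)) x (hD i hx) y (hD i hy) with h | h | h
    · exact Or.inl h
    · exact Or.inr (Or.inl ⟨h, ha, hx, hy⟩)
    · exact Or.inr (Or.inr ⟨h, ha, hy, hx⟩)

lemma restrict_subnet (N : CPNet ι V) (D : ι → Finset V) (hD : ∀ i, D i ⊆ N.dom i)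
    (hne : ∀ i, (D i).Nonempty) : (N.restrict D hD hne).Subnet N :=
  ⟨hD, rfl, fun _ _ _ _ => Iff.rfl⟩

lemma subnet_refl (N : CPNet ι V) : N.Subnet N := by
  refine ⟨fun i => Finset.Subset.refl _, rfl, fun i a x y => ?_⟩
  constructor
  · intro h
    obtain ⟨ha, hx, hy⟩ := N.pref_dom i a x y h
    exact ⟨h, ha, hx, hy⟩
  · exact fun h => h.1

lemma subnet_trans {M₂ M₁ N : CPNet ι V} (h21 : M₂.Subnet M₁) (h1N : M₁.Subnet N) :
    M₂.Subnet N := by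
  refine ⟨fun i => (h21.1 i).trans (h1N.1 i), h21.2.1.trans h1N.2.1, fun i a x y => ?_⟩
  constructor
  · intro h
    obtain ⟨h1, hv2, hx2, hy2⟩ := (h21.2.2 i a x y).1 h
    obtain ⟨hN, -, -, -⟩ := (h1N.2.2 i a x y).1 h1
    exact ⟨hN, hv2, hx2, hy2⟩
  · rintro ⟨hN, hv2, hx2, hy2⟩
    refine (h21.2.2 i a x y).2 ⟨?_, hv2, hx2, hy2⟩
    exact (h1N.2.2 i a x y).2 ⟨hN, fun j => h21.1 j (hv2 j), h21.1 i hx2, h21.1 i hy2⟩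

lemma subnet_ext {M₁ M₂ N : CPNet ι V} (h1 : M₁.Subnet N) (h2 : M₂.Subnet N)
    (hdom : M₁.dom = M₂.dom) : M₁ = M₂ := by
  have hpar : M₁.parents = M₂.parents := h1.2.1.trans h2.2.1.symm
  have hval : ∀ a, M₁.Valid a ↔ M₂.Valid a := fun a => by
    unfold Valid; rw [hdom]
  have hpref : M₁.pref = M₂.pref := by
    funext i a x y
    apply propext
    rw [h1.2.2 i a x y, h2.2.2 i a x y]
    constructor
    · rintro ⟨hN, hv, hx, hy⟩
      exact ⟨hN, (hval a).1 hv, hdom ▸ hx, hdom ▸ hy⟩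
    · rintro ⟨hN, hv, hx, hy⟩
      exact ⟨hN, (hval a).2 hv, by rw [hdom]; exact hx, by rw [hdom]; exact hy⟩
  cases M₁
  cases M₂
  simp only at hdom hpar hpref
  subst hdom
  subst hpar
  subst hpref
  rfl

end CPNet

/-- For each acyclic CP-net `N` there exists a unique subnet `N'` with
all domains singletons such that `N →*_NBR N'`. -/
theorem acyclic_nbrSteps_singleton {ι V : Type*} [Fintype ι] (N : CPNet ι V)
    (hacyclic : N.Acyclic) :
    ∃! N' : CPNet ι V, N'.Subnet N ∧ (∀ i, ∃ v, N'.dom i = {v}) ∧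
      Relation.ReflTransGen CPNet.NBRStep N N' := by
  classical
  have wfT : WellFounded (Relation.TransGen (fun a b : ι => a ∈ N.parents b)) := by
    haveI : IsTrans ι (Relation.TransGen (fun a b : ι => a ∈ N.parents b)) :=
      ⟨fun _ _ _ => Relation.TransGen.trans⟩
    haveI : IsIrrefl ι (Relation.TransGen (fun a b : ι => a ∈ N.parents b)) :=
      ⟨hacyclic⟩
    exact Finite.wellFounded_of_trans_of_irrefl _
  have wf : WellFounded (fun a b : ι => a ∈ N.parents b) :=
    Subrelation.wf (fun h => Relation.TransGen.single h) wfT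
  have homem : ∀ i, N.opt wf i ∈ N.dom i := fun i => N.opt_mem wf i
  set N' : CPNet ι V := N.restrict (fun i => {N.opt wf i})
    (fun i => Finset.singleton_subset_iff.mpr (homem i))
    (fun i => Finset.singleton_nonempty _) with hN'
  have hN'dom : ∀ i, N'.dom i = {N.opt wf i} := fun i => rfl
  have hN'sub : N'.Subnet N := CPNet.restrict_subnet N _ _ _
  -- key chain lemma
  have key : ∀ n (M : CPNet ι V), (∑ i, (M.dom i).card) = n → M.Subnet N →
      (∀ i, N.opt wf i ∈ M.dom i) → Relation.ReflTransGen CPNet.NBRStep M N' := by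
    intro n
    induction n using Nat.strong_induction_on with
    | _ n ih =>
      intro M hsum hsubM hoM
      by_cases hall : ∀ i, M.dom i = {N.opt wf i}
      · have : M = N' := CPNet.subnet_ext hsubM hN'sub (funext hall)
        rw [this]
      · push_neg at hall
        obtain ⟨m, hmS, hmin⟩ := WellFounded.has_min wfT
          {i | M.dom i ≠ ({N.opt wf i} : Finset V)} hall
        have hparsing : ∀ j ∈ N.parents m, M.dom j = {N.opt wf j} := by
          intro j hj
          by_contra hne
          exact hmin j hne (Relation.TransGen.single hj)
        -- there is some non-optimal element in dom m
        have hmne : ∃ d ∈ M.dom m, d ≠ N.opt wf m := by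
          by_contra hc
          push_neg at hc
          exact hmS (Finset.eq_singleton_iff_unique_mem.mpr ⟨hoM m, hc⟩)
        obtain ⟨d₀, hd₀, hd₀ne⟩ := hmne
        have hDsub : ∀ i, (Function.update M.dom m ({N.opt wf m} : Finset V)) i ⊆ M.dom i := by
          intro i
          by_cases him : i = m
          · subst him
            rw [Function.update_self]
            exact Finset.singleton_subset_iff.mpr (hoM i)
          · rw [Function.update_of_ne him]
        have hDne : ∀ i, ((Function.update M.dom m ({N.opt wf m} : Finset V)) i).Nonempty := by
          intro i
          by_cases him : i = m
          · subst him
            rw [Function.update_self]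
            exact Finset.singleton_nonempty _
          · rw [Function.update_of_ne him]
            exact M.dom_nonempty i
        set M' : CPNet ι V := M.restrict (Function.update M.dom m ({N.opt wf m} : Finset V))
          hDsub hDne with hM'
        have hM'dom : ∀ i, M'.dom i = Function.update M.dom m ({N.opt wf m} : Finset V) i :=
          fun i => rfl
        have hM'subM : M'.Subnet M := CPNet.restrict_subnet M _ _ _
        -- the never-best-response property
        have hnbr : ∀ d ∈ M.dom m, d ≠ N.opt wf m → M.NeverBestResponse m d := by
          intro d hd hdne a ha hbr
          have h1 : M.pref m a d (N.opt wf m) := by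
            rcases hbr (N.opt wf m) (hoM m) with h | h
            · exact h
            · exact absurd h hdne
          have h1' : N.pref m a d (N.opt wf m) := ((hsubM.2.2 m a d (N.opt wf m)).1 h1).1
          have haN : N.Valid a := fun j => hsubM.1 j (ha j)
          have hpar : ∀ j ∈ N.parents m, a j = N.opt wf j := by
            intro j hj
            have := ha j
            rw [hparsing j hj] at this
            exact Finset.mem_singleton.mp this
          have h2 := N.opt_best wf m a haN hpar d (hsubM.1 m hd)
          rcases h2 with h2 | h2
          · exact N.pref_irrefl m a d (N.pref_trans m a d (N.opt wf m) d h1' h2)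
          · exact hdne h2.symm
        have hstep : CPNet.NBRStep M M' := by
          refine ⟨?_, hM'subM, ?_⟩
          · intro hEq
            apply hmS
            have := hM'dom m
            rw [← hEq] at this
            rw [this, Function.update_self]
          · intro i d hd hnd
            by_cases him : i = m
            · subst him
              rw [hM'dom, Function.update_self, Finset.mem_singleton] at hnd
              exact hnbr d hd hnd
            · rw [hM'dom, Function.update_of_ne him] at hnd
              exact absurd hd hnd
        have hlt : (∑ i, (M'.dom i).card) < n := by
          rw [← hsum]
          apply Finset.sum_lt_sum
          · intro i _
            exact Finset.card_le_card (hDsub i)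
          · refine ⟨m, Finset.mem_univ m, ?_⟩
            rw [hM'dom, Function.update_self, Finset.card_singleton]
            exact Finset.one_lt_card.mpr ⟨d₀, hd₀, N.opt wf m, hoM m, hd₀ne⟩
        have hM'sub : M'.Subnet N := CPNet.subnet_trans hM'subM hsubM
        have hoM' : ∀ i, N.opt wf i ∈ M'.dom i := by
          intro i
          rw [hM'dom]
          by_cases him : i = m
          · subst him
            rw [Function.update_self]
            exact Finset.mem_singleton_self _
          · rw [Function.update_of_ne him]
            exact hoM i
        exact Relation.ReflTransGen.head hstep
          (ih _ hlt M' rfl hM'sub hoM')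
  refine ⟨N', ⟨hN'sub, fun i => ⟨N.opt wf i, hN'dom i⟩, key _ N rfl (CPNet.subnet_refl N) homem⟩, ?_⟩
  rintro N'' ⟨hsub'', hsing'', hchain''⟩
  -- invariant along any NBR chain
  have inv : ∀ M : CPNet ι V, Relation.ReflTransGen CPNet.NBRStep N M →
      M.Subnet N ∧ ∀ i, N.opt wf i ∈ M.dom i := by
    intro M hM
    induction hM with
    | refl => exact ⟨CPNet.subnet_refl N, homem⟩
    | @tail b c hab hstep ih =>
      refine ⟨CPNet.subnet_trans hstep.2.1 ih.1, ?_⟩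
      intro i
      by_contra hno
      have hnbri := hstep.2.2 i (N.opt wf i) (ih.2 i) hno
      apply hnbri (N.opt wf) (fun j => ih.2 j)
      intro d' hd'
      have hopt := N.opt_best wf i (N.opt wf) (fun j => homem j) (fun j _ => rfl)
      rcases hopt d' (ih.1.1 i hd') with h | h
      · exact Or.inl ((ih.1.2.2 i (N.opt wf) (N.opt wf i) d').2 ⟨h, ih.2, ih.2 i, hd'⟩)
      · exact Or.inr h
  have hinv := inv N'' hchain''
  have hdom'' : N''.dom = fun i => ({N.opt wf i} : Finset V) := by
    funext i
    obtain ⟨v, hv⟩ := hsing'' i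
    have hm := hinv.2 i
    rw [hv] at hm ⊢
    rw [Finset.mem_singleton] at hm
    rw [← hm]
  exact CPNet.subnet_ext hsub'' hN'sub hdom''
end

section
/- Every acyclic CP-net has a unique optimal outcome. -/
lemma CPNet.exists_top {ι V : Type*} (N : CPNet ι V) (i : ι) (a : ι → V)
    (ha : N.Valid a) :
    ∃ d ∈ N.dom i, ∀ d' ∈ N.dom i, d' ≠ d → N.pref i a d d' := by
  classical
  have key : ∀ t : Finset V, t.Nonempty → t ⊆ N.dom i →
      ∃ d ∈ t, ∀ d' ∈ t, d' ≠ d → N.pref i a d d' := by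
    intro t
    induction t using Finset.induction_on with
    | empty => intro h; exact absurd rfl h.ne_empty
    | insert _ _ hx =>
      rename_i x t ih
      intro _ hsub
      rcases t.eq_empty_or_nonempty with rfl | hne
      · refine ⟨x, Finset.mem_insert_self _ _, ?_⟩
        intro d' hd' hne'
        simp only [LawfulSingleton.insert_empty_eq, Finset.mem_singleton] at hd'
        exact absurd hd' hne'
      · obtain ⟨d, hd, hmax⟩ := ih hne (fun y hy => hsub (Finset.mem_insert_of_mem hy))
        have hxd : x ∈ N.dom i := hsub (Finset.mem_insert_self _ _)
        have hdd : d ∈ N.dom i := hsub (Finset.mem_insert_of_mem hd)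
        rcases N.pref_total i a ha x hxd d hdd with heq | hxd' | hdx
        · exact absurd (heq ▸ hd) hx
        · refine ⟨x, Finset.mem_insert_self _ _, ?_⟩
          intro d' hd' hne'
          rcases Finset.mem_insert.1 hd' with rfl | hd't
          · exact absurd rfl hne'
          · by_cases h : d' = d
            · exact h ▸ hxd'
            · exact N.pref_trans i a x d d' hxd' (hmax d' hd't h)
        · refine ⟨d, Finset.mem_insert_of_mem hd, ?_⟩
          intro d' hd' hne'
          rcases Finset.mem_insert.1 hd' with rfl | hd't
          · exact hdx
          · exact hmax d' hd't hne'
  exact key _ (N.dom_nonempty i) (fun _ h => h)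

/-- Every acyclic CP-net has a unique optimal outcome. -/
theorem acyclic_unique_optimal {ι V : Type*} [Fintype ι] (N : CPNet ι V)
    (hacyclic : N.Acyclic) :
    ∃! s : ι → V, N.Optimal s := by
  classical
  have hwf : WellFounded (fun a b : ι => a ∈ N.parents b) := by
    have h2 : IsIrrefl ι (Relation.TransGen fun a b : ι => a ∈ N.parents b) := ⟨hacyclic⟩
    have h3 : WellFounded (Relation.TransGen fun a b : ι => a ∈ N.parents b) :=
      Finite.wellFounded_of_trans_of_irrefl _
    exact Subrelation.wf (fun {a b} h => Relation.TransGen.single h) h3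
  set dflt : ι → V := fun j => (N.dom_nonempty j).choose with hdflt
  have hdflt_mem : ∀ j, dflt j ∈ N.dom j := fun j => (N.dom_nonempty j).choose_spec
  let F : ∀ i : ι, (∀ j, j ∈ N.parents i → {v // v ∈ N.dom j}) → {v // v ∈ N.dom i} :=
    fun i s' =>
      let a : ι → V := fun j => if h : j ∈ N.parents i then (s' j h).1 else dflt j
      have hav : N.Valid a := fun j => by
        dsimp only [a]; split
        · exact (s' j ‹_›).2
        · exact hdflt_mem j
      ⟨(N.exists_top i a hav).choose, (N.exists_top i a hav).choose_spec.1⟩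
  let fx : ∀ i : ι, {v // v ∈ N.dom i} := hwf.fix F
  let s : ι → V := fun i => (fx i).1
  have hsval : N.Valid s := fun i => (fx i).2
  let aF : ι → ι → V := fun i j => if h : j ∈ N.parents i then s j else dflt j
  have haFval : ∀ i, N.Valid (aF i) := fun i j => by
    dsimp only [aF]; split
    · exact hsval j
    · exact hdflt_mem j
  have htop : ∀ i, ∀ d' ∈ N.dom i, d' ≠ s i → N.pref i (aF i) (s i) d' := by
    intro i
    have h1 : fx i = F i (fun j _ => fx j) := hwf.fix_eq F i
    have h2 : s i = (N.exists_top i (aF i) (haFval i)).choose :=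
      congrArg Subtype.val h1
    rw [h2]
    exact (N.exists_top i (aF i) (haFval i)).choose_spec.2
  have hkey : ∀ i (b : ι → V), N.Valid b → (∀ j ∈ N.parents i, b j = s j) →
      ∀ d' ∈ N.dom i, d' ≠ s i → N.pref i b (s i) d' := by
    intro i b hb hag d' hd' hne
    have hl := N.pref_local i b (aF i) hb (haFval i) (fun j hj => by
      dsimp only [aF]; rw [dif_pos hj]; exact hag j hj)
    rw [hl]
    exact htop i d' hd' hne
  have hopt : N.Optimal s := by
    refine ⟨hsval, ?_⟩
    intro t hbt
    obtain ⟨u, -, hu⟩ := Relation.TransGen.tail'_iff.1 hbt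
    obtain ⟨huv, hsv, i, hoff, hpref⟩ := hu
    have hag : ∀ j ∈ N.parents i, u j = s j := by
      intro j hj
      refine hoff j (fun h => N.not_self_parent i ?_)
      rwa [h] at hj
    have hui : u i ∈ N.dom i := huv i
    by_cases h : u i = s i
    · rw [h] at hpref; exact N.pref_irrefl i u (s i) hpref
    · have h2 : N.pref i u (s i) (u i) := hkey i u huv hag (u i) hui h
      exact N.pref_irrefl i u (u i) (N.pref_trans i u (u i) (s i) (u i) hpref h2)
  refine ⟨s, hopt, ?_⟩
  intro t ht
  by_contra hne
  obtain ⟨i0, hi0⟩ := Function.ne_iff.1 hne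
  obtain ⟨i, hi, hmin⟩ := hwf.has_min {i | t i ≠ s i} ⟨i0, hi0⟩
  have hag : ∀ j ∈ N.parents i, t j = s j := fun j hj => by
    by_contra h; exact hmin j h hj
  have htval : N.Valid t := ht.1
  have hp : N.pref i t (s i) (t i) := hkey i t htval hag (t i) (htval i) hi
  have ht'val : N.Valid (Function.update t i (s i)) := fun j => by
    rcases eq_or_ne j i with rfl | h
    · rw [Function.update_self]; exact hsval j
    · rw [Function.update_of_ne h]; exact htval j
  have hflip : N.WFlip (Function.update t i (s i)) t := by
    refine ⟨ht'val, htval, i, fun j hj => Function.update_of_ne hj _ _, ?_⟩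
    have heq : N.pref i (Function.update t i (s i)) = N.pref i t :=
      N.pref_local i _ t ht'val htval
        (fun j hj => Function.update_of_ne (fun h => N.not_self_parent i (by rwa [h] at hj)) _ _)
    rw [heq, Function.update_self]
    exact hp
  exact ht.2 _ (Relation.TransGen.single hflip)
end

section
/- There exists a CP-net that has no optimal outcome. Concretely, the CP-net with two variables A and B, domains {a, ā} and {b, b̄}, Pa(A) = {B}, Pa(B) = {A}, and preference statements a : b ≻ b̄, ā : b̄ ≻ b, b : ā ≻ a, b̄ : a ≻ ā satisfies ab ≻ ab̄ ≻ āb̄ ≻ āb ≻ ab, and hence no outcome of this CP-net is optimal. -/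
/-- The preferred value of a variable in the concrete CP-net below: variable `B`
(index `true`) prefers the value of `A`, while variable `A` (index `false`) prefers
the negation of the value of `B`. -/
def cycleBest (i : Bool) (a : Bool → Bool) : Bool := if i then a false else !(a true)

/-- The concrete CP-net from the paper with two variables `A` (index `false`) and
`B` (index `true`), with binary domains (value `true` of `A` is `a`, value `false`
is `ā`; value `true` of `B` is `b`, value `false` is `b̄`), `Pa(A) = {B}`,
`Pa(B) = {A}`, and preference statements
`a : b ≻ b̄`, `ā : b̄ ≻ b`, `b : ā ≻ a`, `b̄ : a ≻ ā`. -/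
def cycleNet : CPNet Bool Bool where
  dom := fun _ => Finset.univ
  dom_nonempty := fun _ => ⟨true, Finset.mem_univ _⟩
  parents := fun i => {!i}
  not_self_parent := by decide
  pref := fun i a x y => x = cycleBest i a ∧ y = !cycleBest i a
  pref_dom := fun i a x y _ =>
    ⟨fun j => Finset.mem_univ _, Finset.mem_univ _, Finset.mem_univ _⟩
  pref_local := by
    intro i a b _ _ h
    cases i
    · have h1 : a true = b true := h true (by decide)
      funext x y
      simp [cycleBest, h1]
    · have h1 : a false = b false := h false (by decide)
      funext x y
      simp [cycleBest, h1]
  pref_irrefl := by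
    rintro i a x ⟨rfl, h⟩
    simp at h
  pref_trans := by
    rintro i a x y z ⟨rfl, rfl⟩ ⟨h, -⟩
    simp at h
  pref_total := by
    intro i a _ x _ y _
    cases x <;> cases y <;> cases hc : cycleBest i a <;> simp [hc]

/-- The outcome of `cycleNet` assigning `va` to variable `A` and `vb` to variable `B`. -/
def outc (va vb : Bool) : Bool → Bool := fun i => if i then vb else va

/-- There exists a CP-net that has no optimal outcome: in the concrete
CP-net `cycleNet` above we have `ab ≻ ab̄ ≻ āb̄ ≻ āb ≻ ab`, and hence no outcome of this
CP-net is optimal. -/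
theorem cycleNet_no_optimal :
    cycleNet.Better (outc true true) (outc true false) ∧
    cycleNet.Better (outc true false) (outc false false) ∧
    cycleNet.Better (outc false false) (outc false true) ∧
    cycleNet.Better (outc false true) (outc true true) ∧
    (∀ s, ¬ cycleNet.Optimal s) := by
  have hv : ∀ va vb, cycleNet.Valid (outc va vb) := fun _ _ i => Finset.mem_univ _
  have f1 : cycleNet.WFlip (outc true true) (outc true false) :=
    ⟨hv _ _, hv _ _, true, by decide, ⟨rfl, rfl⟩⟩
  have f2 : cycleNet.WFlip (outc true false) (outc false false) :=
    ⟨hv _ _, hv _ _, false, by decide, ⟨rfl, rfl⟩⟩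
  have f3 : cycleNet.WFlip (outc false false) (outc false true) :=
    ⟨hv _ _, hv _ _, true, by decide, ⟨rfl, rfl⟩⟩
  have f4 : cycleNet.WFlip (outc false true) (outc true true) :=
    ⟨hv _ _, hv _ _, false, by decide, ⟨rfl, rfl⟩⟩
  refine ⟨.single f1, .single f2, .single f3, .single f4, ?_⟩
  rintro s ⟨hs, hopt⟩
  have hrep : s = outc (s false) (s true) := by
    funext i; cases i <;> rfl
  rcases Bool.eq_false_or_eq_true (s false) with h1 | h1 <;>
    rcases Bool.eq_false_or_eq_true (s true) with h2 | h2 <;>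
      rw [h1, h2] at hrep <;> rw [hrep] at hopt
  · exact hopt _ (Relation.TransGen.single f4)
  · exact hopt _ (Relation.TransGen.single f1)
  · exact hopt _ (Relation.TransGen.single f3)
  · exact hopt _ (Relation.TransGen.single f2)
end
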